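/- arXiv:1908.07650 — 6 statements merged into one kernel-verified Lean document; each statement's English description precedes it below -/
import Mathlib

section
/- Let φ̄ : (0,∞) → (0,∞) be strictly increasing, continuous, with inverse φ̄⁻¹, and suppose there exist constants c₁, c₂ > 0 and β₂ ≥ β₁ > 1 such that c₁(R/r)^{β₁-1} ≤ φ̄(R)/φ̄(r) ≤ c₂(R/r)^{β₂-1} for all 0 < r ≤ R. Then for any c₀ > 0 there exists C ≥ 1 such that for all t, r > 0: (1/C)·r/φ̄⁻¹(t/r) ≤ sup_{s>0} { r/s − c₀ t/φ(s) } ≤ C·r/φ̄⁻¹(t/r), where φ(s) := s·φ̄(s) up to two-sided constants (i.e., a₁ φ(s)/s ≤ φ̄(s) ≤ a₂ φ(s)/s for all s > 0 with constants a₁, a₂ > 0 and φ satisfying the polynomial growth condition with exponents β₁, β₂ > 1). -/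
open Set

theorem stmt_1 (φ φbar ψ : ℝ → ℝ) (c₁ c₂ c₃ c₄ a₁ a₂ β₁ β₂ : ℝ)
    (hc₁ : 0 < c₁) (hc₂ : 0 < c₂) (hc₃ : 0 < c₃) (hc₄ : 0 < c₄)
    (ha₁ : 0 < a₁) (ha₂ : 0 < a₂)
    (hβ₁ : 1 < β₁) (hβ : β₁ ≤ β₂)
    (hmono : StrictMonoOn φbar (Set.Ioi 0)) (hcont : ContinuousOn φbar (Set.Ioi 0))
    (hψ : ∀ s > (0:ℝ), ψ s > 0 ∧ φbar (ψ s) = s)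
    (hbargrowth : ∀ r R : ℝ, 0 < r → r ≤ R →
      c₁ * (R / r) ^ (β₁ - 1) ≤ φbar R / φbar r ∧ φbar R / φbar r ≤ c₂ * (R / r) ^ (β₂ - 1))
    (hφpos : ∀ s > (0:ℝ), 0 < φ s)
    (hcomp : ∀ s > (0:ℝ), a₁ * (φ s / s) ≤ φbar s ∧ φbar s ≤ a₂ * (φ s / s))
    (hφgrowth : ∀ r R : ℝ, 0 < r → r ≤ R →
      c₃ * (R / r) ^ β₁ ≤ φ R / φ r ∧ φ R / φ r ≤ c₄ * (R / r) ^ β₂) :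
    ∀ c₀ > (0:ℝ), ∃ C ≥ (1:ℝ), ∀ t r : ℝ, 0 < t → 0 < r →
      (1 / C) * (r / ψ (t / r)) ≤ sSup {v | ∃ s > (0:ℝ), v = r / s - c₀ * t / φ s} ∧
      sSup {v | ∃ s > (0:ℝ), v = r / s - c₀ * t / φ s} ≤ C * (r / ψ (t / r)) := by
  intro c₀ hc₀
  have hβ1 : 0 < β₁ - 1 := by linarith
  -- positivity of φbar on (0,∞)
  have hφbarpos : ∀ s > (0:ℝ), 0 < φbar s := by
    intro s hs
    have h1 := (hcomp s hs).1
    have h2 : 0 < a₁ * (φ s / s) := by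
      have := hφpos s hs; positivity
    linarith
  -- small scale constant ε
  set ε : ℝ := min 1 ((c₁ * a₁ * c₀) ^ (1 / (β₁ - 1))) with hεdef
  have hεpos : 0 < ε := lt_min one_pos (Real.rpow_pos_of_pos (by positivity) _)
  have hε1 : ε ≤ 1 := min_le_left _ _
  have hεpow : ε ^ (β₁ - 1) ≤ c₁ * a₁ * c₀ := by
    calc ε ^ (β₁ - 1) ≤ ((c₁ * a₁ * c₀) ^ (1 / (β₁ - 1))) ^ (β₁ - 1) :=
          Real.rpow_le_rpow hεpos.le (min_le_right _ _) hβ1.le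
      _ = c₁ * a₁ * c₀ := by
          rw [← Real.rpow_mul (by positivity), one_div,
            inv_mul_cancel₀ (ne_of_gt hβ1), Real.rpow_one]
  -- large scale constant M
  set M : ℝ := max 1 ((2 * c₀ * a₂ / c₁) ^ (1 / (β₁ - 1))) with hMdef
  have hM1 : (1:ℝ) ≤ M := le_max_left _ _
  have hMpos : 0 < M := lt_of_lt_of_le one_pos hM1
  have hMpow : 2 * c₀ * a₂ / c₁ ≤ M ^ (β₁ - 1) := by
    calc 2 * c₀ * a₂ / c₁ = ((2 * c₀ * a₂ / c₁) ^ (1 / (β₁ - 1))) ^ (β₁ - 1) := by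
          rw [← Real.rpow_mul (by positivity), one_div,
            inv_mul_cancel₀ (ne_of_gt hβ1), Real.rpow_one]
      _ ≤ M ^ (β₁ - 1) :=
          Real.rpow_le_rpow (by positivity) (le_max_right _ _) hβ1.le
  set C : ℝ := max (2 * M) (1 / ε) with hCdef
  have hC2M : 2 * M ≤ C := le_max_left _ _
  have hC1 : (1:ℝ) ≤ C := le_trans (by linarith) hC2M
  have hCpos : 0 < C := lt_of_lt_of_le one_pos hC1
  refine ⟨C, hC1, ?_⟩
  intro t r ht hr
  have htr : 0 < t / r := div_pos ht hr
  obtain ⟨hu, hφu⟩ := hψ (t / r) htr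
  set u := ψ (t / r) with hudef
  have hφbaru : 0 < φbar u := by rw [hφu]; exact htr
  have htrw : t = φbar u * r := by
    rw [hφu]; field_simp
  have hru : 0 < r / u := div_pos hr hu
  -- upper bound for every element of the set
  have hub : ∀ s : ℝ, 0 < s → r / s - c₀ * t / φ s ≤ C * (r / u) := by
    intro s hs
    by_cases hcase : s ≤ ε * u
    · -- small s: the expression is nonpositive
      have hsu : s ≤ u := le_trans hcase (by nlinarith)
      have hφbars := hφbarpos s hs
      have hg := (hbargrowth s u hs hsu).1
      have hQpos : 0 < (u / s) ^ (β₁ - 1) := Real.rpow_pos_of_pos (div_pos hu hs) _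
      have hqpos : 0 < (s / u) ^ (β₁ - 1) := Real.rpow_pos_of_pos (div_pos hs hu) _
      have hqQ : (s / u) ^ (β₁ - 1) * (u / s) ^ (β₁ - 1) = 1 := by
        rw [← Real.mul_rpow (by positivity) (by positivity)]
        rw [div_mul_div_comm]
        rw [show s * u / (u * s) = 1 by field_simp]
        exact Real.one_rpow _
      have hq : (s / u) ^ (β₁ - 1) ≤ c₁ * a₁ * c₀ := by
        refine le_trans ?_ hεpow
        refine Real.rpow_le_rpow (by positivity) ?_ hβ1.le
        rw [div_le_iff₀ hu]
        linarith [hcase]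
      have h1 : c₁ * (u / s) ^ (β₁ - 1) * φbar s ≤ φbar u :=
        (le_div_iff₀ hφbars).mp hg
      have h2 : (s / u) ^ (β₁ - 1) * (c₁ * (u / s) ^ (β₁ - 1) * φbar s)
          ≤ (s / u) ^ (β₁ - 1) * φbar u :=
        mul_le_mul_of_nonneg_left h1 hqpos.le
      have h3 : (s / u) ^ (β₁ - 1) * (c₁ * (u / s) ^ (β₁ - 1) * φbar s)
          = c₁ * φbar s := by
        calc (s / u) ^ (β₁ - 1) * (c₁ * (u / s) ^ (β₁ - 1) * φbar s)
            = c₁ * (((s / u) ^ (β₁ - 1) * (u / s) ^ (β₁ - 1)) * φbar s) := by ring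
          _ = c₁ * φbar s := by rw [hqQ, one_mul]
      have h4 : (s / u) ^ (β₁ - 1) * φbar u ≤ c₁ * a₁ * c₀ * φbar u :=
        mul_le_mul_of_nonneg_right hq hφbaru.le
      have h5 : c₁ * φbar s ≤ c₁ * (a₁ * c₀ * φbar u) := by
        rw [h3] at h2
        calc c₁ * φbar s ≤ c₁ * a₁ * c₀ * φbar u := le_trans h2 h4
          _ = c₁ * (a₁ * c₀ * φbar u) := by ring
      have h6 : φbar s ≤ a₁ * (c₀ * φbar u) := by
        have := (mul_le_mul_iff_right₀ hc₁).mp h5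
        linarith [this]
      have h7 : φ s / s ≤ c₀ * φbar u := by
        have := (hcomp s hs).1
        have h8 : a₁ * (φ s / s) ≤ a₁ * (c₀ * φbar u) := le_trans this h6
        exact (mul_le_mul_iff_right₀ ha₁).mp h8
      -- hence r/s ≤ c₀ t / φ s
      have hφs := hφpos s hs
      have hkey : r / s ≤ c₀ * t / φ s := by
        rw [div_le_div_iff₀ hs hφs]
        have h9 : φ s ≤ c₀ * φbar u * s := (div_le_iff₀ hs).mp h7
        have h10 : r * φ s ≤ r * (c₀ * φbar u * s) :=
          mul_le_mul_of_nonneg_left h9 hr.le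
        calc r * φ s ≤ r * (c₀ * φbar u * s) := h10
          _ = c₀ * t * s := by rw [htrw]; ring
      have : r / s - c₀ * t / φ s ≤ 0 := by linarith
      have hpos : 0 ≤ C * (r / u) := by positivity
      linarith
    · -- large s: bound by r/s
      push_neg at hcase
      have hφs := hφpos s hs
      have h1 : c₀ * t / φ s ≥ 0 := by positivity
      have h2 : r / s ≤ r / (ε * u) :=
        div_le_div_of_nonneg_left hr.le (by positivity) hcase.le
      have h3 : r / (ε * u) = (1 / ε) * (r / u) := by field_simp
      have h4 : (1 / ε) * (r / u) ≤ C * (r / u) :=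
        mul_le_mul_of_nonneg_right (le_max_right _ _) hru.le
      linarith
  -- the witness element s = M * u
  have hMu : 0 < M * u := by positivity
  have hφMu := hφpos (M * u) hMu
  have hg := (hbargrowth u (M * u) hu (by nlinarith)).1
  have hMuu : M * u / u = M := mul_div_cancel_right₀ M (ne_of_gt hu)
  have hg' : c₁ * M ^ (β₁ - 1) ≤ φbar (M * u) / φbar u := by
    rw [hMuu] at hg; exact hg
  have hP : c₁ * M ^ (β₁ - 1) * φbar u ≤ φbar (M * u) :=
    (le_div_iff₀ hφbaru).mp hg'
  have hcompMu := (hcomp (M * u) hMu).2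
  have hK : 2 * c₀ * a₂ ≤ c₁ * M ^ (β₁ - 1) := by
    have := (div_le_iff₀ hc₁).mp hMpow
    linarith
  have hφMularge : c₀ * t / φ (M * u) ≤ r / (2 * (M * u)) := by
    rw [div_le_div_iff₀ hφMu (by positivity)]
    -- goal : c₀ * t * (2 * (M * u)) ≤ r * φ (M * u)
    have hbar : φbar (M * u) * (M * u) ≤ a₂ * φ (M * u) := by
      have := mul_le_mul_of_nonneg_right hcompMu hMu.le
      calc φbar (M * u) * (M * u) ≤ a₂ * (φ (M * u) / (M * u)) * (M * u) := this
        _ = a₂ * φ (M * u) := by field_simp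
    have hKpos : 0 < M ^ (β₁ - 1) := Real.rpow_pos_of_pos hMpos _
    have h1 : c₁ * M ^ (β₁ - 1) * φbar u * (M * u) ≤ a₂ * φ (M * u) :=
      le_trans (mul_le_mul_of_nonneg_right hP hMu.le) hbar
    have h2 : 2 * c₀ * a₂ * φbar u * (M * u) ≤ a₂ * φ (M * u) := by
      refine le_trans ?_ h1
      have hnn : 0 ≤ φbar u * (M * u) := by positivity
      have := mul_le_mul_of_nonneg_right hK hnn
      linarith
    have h3 : a₂ * (c₀ * t * (2 * (M * u))) ≤ a₂ * (r * φ (M * u)) := by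
      calc a₂ * (c₀ * t * (2 * (M * u))) = r * (2 * c₀ * a₂ * φbar u * (M * u)) := by
            rw [htrw]; ring
        _ ≤ r * (a₂ * φ (M * u)) := mul_le_mul_of_nonneg_left h2 hr.le
        _ = a₂ * (r * φ (M * u)) := by ring
    exact (mul_le_mul_iff_right₀ ha₂).mp h3
  have hv₀ : (1 / C) * (r / u) ≤ r / (M * u) - c₀ * t / φ (M * u) := by
    have h1 : r / (M * u) - c₀ * t / φ (M * u) ≥ r / (M * u) - r / (2 * (M * u)) := by
      linarith [hφMularge]
    have h2 : r / (M * u) - r / (2 * (M * u)) = (1 / (2 * M)) * (r / u) := by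
      field_simp; ring
    have h3 : (1 / C) * (r / u) ≤ (1 / (2 * M)) * (r / u) := by
      refine mul_le_mul_of_nonneg_right ?_ hru.le
      exact one_div_le_one_div_of_le (by linarith) hC2M
    linarith
  -- set facts
  set S : Set ℝ := {v | ∃ s > (0:ℝ), v = r / s - c₀ * t / φ s} with hSdef
  have hmem : (r / (M * u) - c₀ * t / φ (M * u)) ∈ S := ⟨M * u, hMu, rfl⟩
  have hne : S.Nonempty := ⟨_, hmem⟩
  have hbdd : BddAbove S := by
    refine ⟨C * (r / u), ?_⟩
    rintro v ⟨s, hs, rfl⟩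
    exact hub s hs
  constructor
  · exact le_trans hv₀ (le_csSup hbdd hmem)
  · refine csSup_le hne ?_
    rintro v ⟨s, hs, rfl⟩
    exact hub s hs
end

section
/- Let φ : (0,∞) → (0,∞) be strictly increasing with c₁(R/r)^{β₁} ≤ φ(R)/φ(r) ≤ c₂(R/r)^{β₂} for all 0 < r ≤ R (β₂ ≥ β₁ > 0). Suppose (M,d,μ) satisfies volume doubling with exponent d₂, i.e., V(x,R)/V(x,r) ≤ C̃(R/r)^{d₂}. If J : M×M → [0,∞) satisfies J(x,y) ≤ c₂/(V(x,d(x,y))·φ(d(x,y))) for all x ≠ y, then there is a constant c > 0 such that ∫_{B(x,r)^c} J(x,y) μ(dy) ≤ c/φ(r) for every x ∈ M and r > 0. -/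
open MeasureTheory

theorem stmt_4 {M : Type*} [PseudoMetricSpace M] [MeasurableSpace M]
    (μ : Measure M) (φ : ℝ → ℝ) (J : M → M → ℝ)
    (c₁ c₂ β₁ β₂ C' d₂ : ℝ)
    (hc₁ : 0 < c₁) (hc₂ : 0 < c₂) (hβ₁ : 0 < β₁) (hβ : β₁ ≤ β₂)
    (hC' : 0 < C') (hd₂ : 0 < d₂)
    (hφmono : StrictMonoOn φ (Set.Ioi 0)) (hφpos : ∀ r > (0:ℝ), 0 < φ r)
    (hφgrowth : ∀ r R : ℝ, 0 < r → r ≤ R →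
      c₁ * (R / r) ^ β₁ ≤ φ R / φ r ∧ φ R / φ r ≤ c₂ * (R / r) ^ β₂)
    (hVpos : ∀ (x : M) (r : ℝ), 0 < r → 0 < (μ (Metric.ball x r)).toReal)
    (hVD : ∀ (x : M) (r R : ℝ), 0 < r → r ≤ R →
      (μ (Metric.ball x R)).toReal / (μ (Metric.ball x r)).toReal ≤ C' * (R / r) ^ d₂)
    (hJnonneg : ∀ x y, 0 ≤ J x y)
    (hJ : ∀ x y : M, x ≠ y →
      J x y ≤ c₂ / ((μ (Metric.ball x (dist x y))).toReal * φ (dist x y))) :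
    ∃ c > (0:ℝ), ∀ (x : M) (r : ℝ), 0 < r →
      ∫⁻ y in (Metric.ball x r)ᶜ, ENNReal.ofReal (J x y) ∂μ
        ≤ ENNReal.ofReal (c / φ r) := by
  -- all balls have finite (and positive) measure
  have hfin : ∀ (x : M) (R : ℝ), 0 < R → μ (Metric.ball x R) ≠ ⊤ := by
    intro x R hR h
    have := hVpos x R hR
    rw [h] at this
    simp at this
  set q : ℝ := ((2:ℝ) ^ β₁)⁻¹ with hqdef
  have h2β : 1 < (2:ℝ) ^ β₁ :=
    Real.one_lt_rpow_iff_of_pos (by norm_num) |>.2 (Or.inl ⟨by norm_num, hβ₁⟩)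
  have h2βpos : (0:ℝ) < (2:ℝ) ^ β₁ := lt_trans one_pos h2β
  have hq0 : 0 < q := inv_pos.2 h2βpos
  have hq1 : q < 1 := by
    rw [hqdef]
    exact inv_lt_one_of_one_lt₀ h2β
  have h1q : (0:ℝ) < 1 - q := sub_pos.2 hq1
  have h2d : (0:ℝ) < (2:ℝ) ^ d₂ := Real.rpow_pos_of_pos (by norm_num) _
  set A : ℝ := c₂ * C' * (2:ℝ) ^ d₂ / c₁ with hAdef
  have hA : 0 < A := by positivity
  refine ⟨A / (1 - q), div_pos hA h1q, ?_⟩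
  intro x r hr
  have hφr := hφpos r hr
  set B : ℕ → Set M := fun n =>
    Metric.ball x (2 ^ (n + 1) * r) \ Metric.ball x (2 ^ n * r) with hBdef
  have hcover : (Metric.ball x r)ᶜ ⊆ ⋃ n, B n := by
    intro y hy
    have hD : r ≤ dist x y := by
      simpa [Metric.mem_ball, dist_comm, not_lt] using hy
    have hDpos : 0 < dist x y := lt_of_lt_of_le hr hD
    set t : ℝ := dist x y / r with htdef
    have ht1 : (1:ℝ) ≤ t := (one_le_div hr).2 hD
    set m : ℕ := ⌊t⌋₊ with hmdef
    have hm1 : 1 ≤ m := Nat.le_floor (by exact_mod_cast ht1)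
    set n : ℕ := Nat.log 2 m with hndef
    have hlow : ((2:ℕ) ^ n : ℝ) ≤ t :=
      le_trans (by exact_mod_cast Nat.pow_log_le_self 2 (by omega))
        (Nat.floor_le (by linarith))
    have hhighℕ : m + 1 ≤ 2 ^ (n + 1) := Nat.lt_pow_succ_log_self (by norm_num) m
    have hhigh : t < ((2:ℕ) ^ (n + 1) : ℝ) := by
      have h1 : t < (m : ℝ) + 1 := Nat.lt_floor_add_one t
      have h2 : ((m : ℝ) + 1) ≤ ((2:ℕ) ^ (n + 1) : ℝ) := by exact_mod_cast hhighℕ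
      linarith
    refine Set.mem_iUnion.2 ⟨n, ?_, ?_⟩
    · have : dist x y < 2 ^ (n + 1) * r := by
        have := (div_lt_iff₀ hr).1 (by exact_mod_cast hhigh)
        push_cast at this ⊢
        linarith
      simpa [Metric.mem_ball, dist_comm] using this
    · have : 2 ^ n * r ≤ dist x y := by
        have := (le_div_iff₀ hr).1 (by exact_mod_cast hlow)
        push_cast at this ⊢
        linarith
      simp [Metric.mem_ball, dist_comm, not_lt, this]
  -- per-annulus estimate
  have hann : ∀ n : ℕ, ∫⁻ y in B n, ENNReal.ofReal (J x y) ∂μ ≤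
      ENNReal.ofReal (A / φ r * q ^ n) := by
    intro n
    set ρ : ℝ := 2 ^ n * r with hρdef
    set ρ' : ℝ := 2 ^ (n + 1) * r with hρ'def
    have hρpos : 0 < ρ := by positivity
    have hρ'pos : 0 < ρ' := by positivity
    have hρρ' : ρ ≤ ρ' := by
      rw [hρdef, hρ'def, pow_succ]
      nlinarith [pow_pos (by norm_num : (0:ℝ) < 2) n]
    set Vρ : ℝ := (μ (Metric.ball x ρ)).toReal with hVρdef
    set Vρ' : ℝ := (μ (Metric.ball x ρ')).toReal with hVρ'def
    have hVρpos : 0 < Vρ := hVpos x ρ hρpos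
    have hφρpos : 0 < φ ρ := hφpos ρ hρpos
    set K : ℝ := c₂ / (Vρ * φ ρ) with hKdef
    have hK0 : 0 ≤ K := by positivity
    -- pointwise bound on the annulus
    have hpt : ∀ y ∈ B n, ENNReal.ofReal (J x y) ≤ ENNReal.ofReal K := by
      intro y hy
      have hyd : ρ ≤ dist x y := by
        have := hy.2
        simpa [Metric.mem_ball, dist_comm, not_lt] using this
      have hydpos : 0 < dist x y := lt_of_lt_of_le hρpos hyd
      have hxy : x ≠ y := by
        intro h
        rw [h] at hydpos
        simp at hydpos
      refine ENNReal.ofReal_le_ofReal (le_trans (hJ x y hxy) ?_)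
      have hmono : Vρ ≤ (μ (Metric.ball x (dist x y))).toReal :=
        ENNReal.toReal_mono (hfin x _ hydpos)
          (measure_mono (Metric.ball_subset_ball hyd))
      have hφmono' : φ ρ ≤ φ (dist x y) :=
        (hφmono.monotoneOn) (Set.mem_Ioi.2 hρpos) (Set.mem_Ioi.2 hydpos) hyd
      apply div_le_div_of_nonneg_left hc₂.le (by positivity)
      exact mul_le_mul hmono hφmono' hφρpos.le
        (le_trans hVρpos.le hmono)
    have step1 : ∫⁻ y in B n, ENNReal.ofReal (J x y) ∂μ ≤
        ENNReal.ofReal K * μ (B n) := by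
      calc ∫⁻ y in B n, ENNReal.ofReal (J x y) ∂μ
          ≤ ∫⁻ _ in B n, ENNReal.ofReal K ∂μ :=
            setLIntegral_mono measurable_const hpt
        _ = ENNReal.ofReal K * μ (B n) := setLIntegral_const _ _
    have step2 : μ (B n) ≤ ENNReal.ofReal Vρ' := by
      have : μ (B n) ≤ μ (Metric.ball x ρ') :=
        measure_mono Set.diff_subset
      rwa [← ENNReal.ofReal_toReal (hfin x ρ' hρ'pos)] at this
    have hreal : Vρ' * K ≤ A / φ r * q ^ n := by
      -- doubling bound
      have hdb : Vρ' ≤ C' * (2:ℝ) ^ d₂ * Vρ := by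
        have h := hVD x ρ ρ' hρpos hρρ'
        have hratio : ρ' / ρ = 2 := by
          rw [hρdef, hρ'def, pow_succ]
          field_simp
        rw [hratio, div_le_iff₀ hVρpos] at h
        linarith
      -- growth bound
      have hgr : c₁ * ((2:ℝ) ^ β₁) ^ n * φ r ≤ φ ρ := by
        have hrρ : r ≤ ρ := by
          rw [hρdef]
          nlinarith [one_le_pow₀ (by norm_num : (1:ℝ) ≤ 2) (n := n)]
        have h := (hφgrowth r ρ hr hrρ).1
        have hratio : ρ / r = (2:ℝ) ^ n := by
          rw [hρdef]; field_simp
        rw [hratio] at h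
        have hpow : ((2:ℝ) ^ n) ^ β₁ = ((2:ℝ) ^ β₁) ^ n := by
          rw [← Real.rpow_natCast (2:ℝ) n, ← Real.rpow_natCast ((2:ℝ) ^ β₁) n,
            ← Real.rpow_mul (by norm_num), ← Real.rpow_mul (by norm_num), mul_comm]
        rw [hpow] at h
        calc c₁ * ((2:ℝ) ^ β₁) ^ n * φ r ≤ (φ ρ / φ r) * φ r :=
              mul_le_mul_of_nonneg_right h hφr.le
          _ = φ ρ := div_mul_cancel₀ _ (ne_of_gt hφr)
      have hgrpos : 0 < c₁ * ((2:ℝ) ^ β₁) ^ n * φ r := by positivity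
      calc Vρ' * K ≤ (C' * (2:ℝ) ^ d₂ * Vρ) * K :=
            mul_le_mul_of_nonneg_right hdb hK0
        _ = C' * (2:ℝ) ^ d₂ * c₂ / φ ρ := by
            rw [hKdef]; field_simp
        _ ≤ C' * (2:ℝ) ^ d₂ * c₂ / (c₁ * ((2:ℝ) ^ β₁) ^ n * φ r) :=
            div_le_div_of_nonneg_left (by positivity) hgrpos hgr
        _ = A / φ r * q ^ n := by
            rw [hAdef, hqdef, inv_pow]
            field_simp
    calc ∫⁻ y in B n, ENNReal.ofReal (J x y) ∂μ
        ≤ ENNReal.ofReal K * μ (B n) := step1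
      _ ≤ ENNReal.ofReal K * ENNReal.ofReal Vρ' :=
          mul_le_mul_right step2 _
      _ = ENNReal.ofReal (Vρ' * K) := by
          rw [← ENNReal.ofReal_mul hK0, mul_comm]
      _ ≤ ENNReal.ofReal (A / φ r * q ^ n) := ENNReal.ofReal_le_ofReal hreal
  calc ∫⁻ y in (Metric.ball x r)ᶜ, ENNReal.ofReal (J x y) ∂μ
      ≤ ∫⁻ y in ⋃ n, B n, ENNReal.ofReal (J x y) ∂μ :=
        lintegral_mono_set hcover
    _ ≤ ∑' n, ∫⁻ y in B n, ENNReal.ofReal (J x y) ∂μ := lintegral_iUnion_le _ _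
    _ ≤ ∑' n, ENNReal.ofReal (A / φ r * q ^ n) := ENNReal.tsum_le_tsum hann
    _ = ENNReal.ofReal (A / φ r) * ∑' n : ℕ, (ENNReal.ofReal q) ^ n := by
        rw [ENNReal.tsum_mul_left.symm]
        congr 1
        ext n
        rw [← ENNReal.ofReal_pow hq0.le, ← ENNReal.ofReal_mul (by positivity)]
    _ = ENNReal.ofReal (A / φ r) * ENNReal.ofReal ((1 - q)⁻¹) := by
        rw [ENNReal.tsum_geometric, ← ENNReal.ofReal_one,
          ← ENNReal.ofReal_sub _ hq0.le, ENNReal.ofReal_inv_of_pos h1q]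
    _ = ENNReal.ofReal (A / (1 - q) / φ r) := by
        rw [← ENNReal.ofReal_mul (by positivity)]
        congr 1
        simp only [div_eq_mul_inv]
        ring
end

section
/- Let J be a symmetric nonnegative measure on D×D for a measurable set D. For all bounded measurable f, g on D and every η > 0: (1 − η⁻¹) ∬_{D×D} f(x)² (g(x)−g(y))² J(dx,dy) ≤ ∬_{D×D} (g(x)f(x)² − g(y)f(y)²)(g(x)−g(y)) J(dx,dy) + η ∬_{D×D} g(x)² (f(x)−f(y))² J(dx,dy). -/
open MeasureTheory

theorem stmt_8 {M : Type*} [MeasurableSpace M]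
    (J : Measure (M × M))
    (hsymm : J.map Prod.swap = J)
    (f g : M → ℝ) (hf : Measurable f) (hg : Measurable g)
    (hfb : ∃ Cf : ℝ, ∀ x, |f x| ≤ Cf) (hgb : ∃ Cg : ℝ, ∀ x, |g x| ≤ Cg)
    (η : ℝ) (hη : 0 < η)
    (h1 : Integrable (fun p : M × M => (f p.1) ^ 2 * (g p.1 - g p.2) ^ 2) J)
    (h2 : Integrable
      (fun p : M × M => (g p.1 * (f p.1) ^ 2 - g p.2 * (f p.2) ^ 2) * (g p.1 - g p.2)) J)
    (h3 : Integrable (fun p : M × M => (g p.1) ^ 2 * (f p.1 - f p.2) ^ 2) J) :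
    (1 - η⁻¹) * ∫ p, (f p.1) ^ 2 * (g p.1 - g p.2) ^ 2 ∂J
      ≤ (∫ p, (g p.1 * (f p.1) ^ 2 - g p.2 * (f p.2) ^ 2) * (g p.1 - g p.2) ∂J)
        + η * ∫ p, (g p.1) ^ 2 * (f p.1 - f p.2) ^ 2 ∂J := by
  have hcoe : (⇑(MeasurableEquiv.prodComm : M × M ≃ᵐ M × M) : M × M → M × M) = Prod.swap := rfl
  have key : ∀ h : M × M → ℝ, ∫ p, h (Prod.swap p) ∂J = ∫ p, h p ∂J := by
    intro h
    conv_rhs => rw [← hsymm]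
    rw [← hcoe, MeasureTheory.integral_map_equiv]
  have keyInt : ∀ h : M × M → ℝ, Integrable h J → Integrable (fun p => h (Prod.swap p)) J := by
    intro h hh
    rw [← hsymm, ← hcoe, MeasureTheory.integrable_map_equiv] at hh
    exact hh
  -- swapped integrands
  have i1' : Integrable (fun p : M × M => (f p.2) ^ 2 * (g p.1 - g p.2) ^ 2) J :=
    (keyInt _ h1).congr (Filter.Eventually.of_forall fun p => by simp only [Prod.fst_swap, Prod.snd_swap]; ring)
  have i3' : Integrable (fun p : M × M => (g p.2) ^ 2 * (f p.1 - f p.2) ^ 2) J :=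
    (keyInt _ h3).congr (Filter.Eventually.of_forall fun p => by simp only [Prod.fst_swap, Prod.snd_swap]; ring)
  have e1 : ∫ p, (f p.2) ^ 2 * (g p.1 - g p.2) ^ 2 ∂J
      = ∫ p, (f p.1) ^ 2 * (g p.1 - g p.2) ^ 2 ∂J := by
    rw [← key (fun p => (f p.1) ^ 2 * (g p.1 - g p.2) ^ 2)]
    apply integral_congr_ae
    filter_upwards with p
    simp only [Prod.fst_swap, Prod.snd_swap]; ring
  have e3 : ∫ p, (g p.2) ^ 2 * (f p.1 - f p.2) ^ 2 ∂J
      = ∫ p, (g p.1) ^ 2 * (f p.1 - f p.2) ^ 2 ∂J := by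
    rw [← key (fun p => (g p.1) ^ 2 * (f p.1 - f p.2) ^ 2)]
    apply integral_congr_ae
    filter_upwards with p
    simp only [Prod.fst_swap, Prod.snd_swap]; ring
  -- pointwise symmetrized inequality
  have hηinv : η * η⁻¹ = 1 := mul_inv_cancel₀ hη.ne'
  have pt : ∀ p : M × M,
      (1 - η⁻¹) * ((f p.1) ^ 2 * (g p.1 - g p.2) ^ 2 + (f p.2) ^ 2 * (g p.1 - g p.2) ^ 2)
        ≤ 2 * ((g p.1 * (f p.1) ^ 2 - g p.2 * (f p.2) ^ 2) * (g p.1 - g p.2))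
          + η * ((g p.1) ^ 2 * (f p.1 - f p.2) ^ 2 + (g p.2) ^ 2 * (f p.1 - f p.2) ^ 2) := by
    intro p
    set a := f p.1; set b := f p.2; set c := g p.1; set d := g p.2
    have h2A : 2 * ((c * a ^ 2 - d * b ^ 2) * (c - d))
        = (a ^ 2 + b ^ 2) * (c - d) ^ 2 + (c + d) * (a + b) * (a - b) * (c - d) := by ring
    have hcross : -(η⁻¹ * ((a ^ 2 + b ^ 2) * (c - d) ^ 2))
          - η * (c ^ 2 * (a - b) ^ 2 + d ^ 2 * (a - b) ^ 2)
        ≤ (c + d) * (a + b) * (a - b) * (c - d) := by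
      have hsq : 0 ≤ (η * ((c + d) * (a - b)) + (a + b) * (c - d)) ^ 2 := sq_nonneg _
      have hsq2 : 0 ≤ ((c - d) * (a + b)) ^ 2 := sq_nonneg _
      have hsq3 : 0 ≤ ((a - b) * (c - d)) ^ 2 := sq_nonneg _
      have hsq4 : 0 ≤ ((c - d) * (a - b)) ^ 2 := sq_nonneg _
      nlinarith [sq_nonneg ((c - d) * (a - b)), sq_nonneg ((c + d) * (a - b)),
        sq_nonneg ((a + b) * (c - d)), mul_pos hη hη, hη.le]
    nlinarith [hcross]
  -- integrate
  have intL : Integrable (fun p : M × M =>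
      (1 - η⁻¹) * ((f p.1) ^ 2 * (g p.1 - g p.2) ^ 2 + (f p.2) ^ 2 * (g p.1 - g p.2) ^ 2)) J :=
    ((h1.add i1').const_mul _)
  have intR : Integrable (fun p : M × M =>
      2 * ((g p.1 * (f p.1) ^ 2 - g p.2 * (f p.2) ^ 2) * (g p.1 - g p.2))
        + η * ((g p.1) ^ 2 * (f p.1 - f p.2) ^ 2 + (g p.2) ^ 2 * (f p.1 - f p.2) ^ 2)) J :=
    (h2.const_mul 2).add ((h3.add i3').const_mul η)
  have := integral_mono intL intR (fun p => pt p)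
  have E1 := integral_add h1 i1'
  have E2 := integral_add (h2.const_mul (2:ℝ)) ((h3.add i3').const_mul η)
  have E3 := integral_add h3 i3'
  have E4 := integral_const_mul (μ := J) (1 - η⁻¹)
    (fun p : M × M => (f p.1) ^ 2 * (g p.1 - g p.2) ^ 2 + (f p.2) ^ 2 * (g p.1 - g p.2) ^ 2)
  have E5 := integral_const_mul (μ := J) (2:ℝ)
    (fun p : M × M => (g p.1 * (f p.1) ^ 2 - g p.2 * (f p.2) ^ 2) * (g p.1 - g p.2))
  have E6 := integral_const_mul (μ := J) η
    (fun p : M × M => (g p.1) ^ 2 * (f p.1 - f p.2) ^ 2 + (g p.2) ^ 2 * (f p.1 - f p.2) ^ 2)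
  simp only [Pi.add_apply] at E2
  rw [E4, E1, e1, E2, E5, E6, E3, e3] at this
  linarith [this]
end

section
/- Let φ_c satisfy c₁(R/r)^{β₁} ≤ φ_c(R)/φ_c(r) ≤ c₂(R/r)^{β₂} for 0 < r ≤ R with β₂ ≥ β₁ > 1, and let φ̄_c satisfy a₁ φ_c(r)/r ≤ φ̄_c(r) ≤ a₂ φ_c(r)/r, with φ̄_c strictly increasing. Then there exist constants k₁, k₂ > 0 such that for all t, r > 0 with φ_c(r) ≥ t: k₁ (φ_c(r)/t)^{1/(β₂−1)} ≤ r/φ̄_c⁻¹(t/r) ≤ k₂ (φ_c(r)/t)^{1/(β₁−1)}. -/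
set_option maxHeartbeats 1000000

private lemma rpow_one_div_pow {x b : ℝ} (hx : 0 < x) (hb : 0 < b) :
    (x ^ (1 / b)) ^ b = x := by
  rw [one_div]; exact Real.rpow_inv_rpow hx.le hb.ne'

private lemma key_rpow {a x β : ℝ} (ha : 0 < a) (hx : 0 < x) (hb : 0 < β - 1) :
    ((a * x ^ (1 / (β - 1)))⁻¹) ^ β = (a ^ (β - 1) * x * (a * x ^ (1 / (β - 1))))⁻¹ := by
  have hy : (0:ℝ) < a * x ^ (1 / (β - 1)) := by positivity
  have hsplit : (a * x ^ (1 / (β - 1))) ^ β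
      = (a * x ^ (1 / (β - 1))) ^ (β - 1) * (a * x ^ (1 / (β - 1))) := by
    rw [← Real.rpow_add_one hy.ne' (β - 1), sub_add_cancel]
  rw [Real.inv_rpow hy.le, hsplit, Real.mul_rpow ha.le (by positivity),
    rpow_one_div_pow hx hb]

theorem stmt_12 (φc φbar ψbar : ℝ → ℝ) (c₁ c₂ a₁ a₂ β₁ β₂ : ℝ)
    (hc₁ : 0 < c₁) (hc₂ : 0 < c₂) (ha₁ : 0 < a₁) (ha₂ : 0 < a₂)
    (hβ₁ : 1 < β₁) (hβ : β₁ ≤ β₂)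
    (hφpos : ∀ r > (0:ℝ), 0 < φc r)
    (hgrowth : ∀ r R : ℝ, 0 < r → r ≤ R →
      c₁ * (R / r) ^ β₁ ≤ φc R / φc r ∧ φc R / φc r ≤ c₂ * (R / r) ^ β₂)
    (hbarmono : StrictMonoOn φbar (Set.Ioi 0))
    (hcomp : ∀ r > (0:ℝ), a₁ * (φc r / r) ≤ φbar r ∧ φbar r ≤ a₂ * (φc r / r))
    (hψbar : ∀ s > (0:ℝ), ψbar s > 0 ∧ φbar (ψbar s) = s) :
    ∃ k₁ > (0:ℝ), ∃ k₂ > (0:ℝ), ∀ t r : ℝ, 0 < t → 0 < r → t ≤ φc r →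
      k₁ * (φc r / t) ^ (1 / (β₂ - 1)) ≤ r / ψbar (t / r) ∧
      r / ψbar (t / r) ≤ k₂ * (φc r / t) ^ (1 / (β₁ - 1)) := by
  have hb1 : (0:ℝ) < β₁ - 1 := by linarith
  have hb2 : (0:ℝ) < β₂ - 1 := by linarith
  -- the three constants
  set m : ℝ := min 1 ((c₁ / a₂) ^ (1 / (β₁ - 1))) with hm_def
  have hm_pos : 0 < m :=
    lt_min one_pos (Real.rpow_pos_of_pos (div_pos hc₁ ha₂) _)
  have hm_le1 : m ≤ 1 := min_le_left _ _
  have hm_pow : m ^ (β₁ - 1) ≤ c₁ / a₂ := by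
    calc m ^ (β₁ - 1) ≤ ((c₁ / a₂) ^ (1 / (β₁ - 1))) ^ (β₁ - 1) :=
          Real.rpow_le_rpow hm_pos.le (min_le_right _ _) hb1.le
      _ = c₁ / a₂ := rpow_one_div_pow (div_pos hc₁ ha₂) hb1
  set M : ℝ := max 1 ((c₂ / a₁) ^ (1 / (β₂ - 1))) with hM_def
  have hM1 : (1:ℝ) ≤ M := le_max_left _ _
  have hM_pos : (0:ℝ) < M := lt_of_lt_of_le one_pos hM1
  have hM_pow : c₂ / a₁ ≤ M ^ (β₂ - 1) := by
    calc c₂ / a₁ = ((c₂ / a₁) ^ (1 / (β₂ - 1))) ^ (β₂ - 1) :=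
          (rpow_one_div_pow (div_pos hc₂ ha₁) hb2).symm
      _ ≤ M ^ (β₂ - 1) :=
          Real.rpow_le_rpow (Real.rpow_nonneg (div_pos hc₂ ha₁).le _)
            (le_max_right _ _) hb2.le
  set M₀ : ℝ := max 1 ((1 / (a₁ * c₁)) ^ (1 / (β₁ - 1))) with hM₀_def
  have hM₀1 : (1:ℝ) ≤ M₀ := le_max_left _ _
  have hM₀_pos : (0:ℝ) < M₀ := lt_of_lt_of_le one_pos hM₀1
  have hM₀_pow : 1 / (a₁ * c₁) ≤ M₀ ^ (β₁ - 1) := by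
    calc 1 / (a₁ * c₁) = ((1 / (a₁ * c₁)) ^ (1 / (β₁ - 1))) ^ (β₁ - 1) :=
          (rpow_one_div_pow (by positivity) hb1).symm
      _ ≤ M₀ ^ (β₁ - 1) :=
          Real.rpow_le_rpow (Real.rpow_nonneg (by positivity) _)
            (le_max_right _ _) hb1.le
  refine ⟨1 / (M₀ * M), by positivity, 1 / m, by positivity, ?_⟩
  intro t r ht hr htφ
  have hφr : 0 < φc r := hφpos r hr
  have hs : 0 < t / r := div_pos ht hr
  obtain ⟨hu, hfu⟩ := hψbar (t / r) hs
  set u := ψbar (t / r) with hu_def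
  set X : ℝ := t / φc r with hX_def
  have hXpos : 0 < X := div_pos ht hφr
  have hX1 : X ≤ 1 := (div_le_one hφr).mpr htφ
  have hXinv : X⁻¹ = φc r / t := by rw [hX_def, inv_div]
  -- order reflection for φbar
  have key : ∀ x y : ℝ, 0 < x → 0 < y → φbar x ≤ φbar y → x ≤ y := by
    intro x y hx hy h
    exact (hbarmono.le_iff_le (Set.mem_Ioi.mpr hx) (Set.mem_Ioi.mpr hy)).mp h
  constructor
  · -- lower bound: k₁ * (φc r / t) ^ (1/(β₂-1)) ≤ r / u
    set Xq : ℝ := X ^ (1 / (β₂ - 1)) with hXq_def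
    have hXq_pos : 0 < Xq := Real.rpow_pos_of_pos hXpos _
    have hXq_le1 : Xq ≤ 1 := Real.rpow_le_one hXpos.le hX1 (by positivity)
    have hXq_pow : Xq ^ (β₂ - 1) = X := rpow_one_div_pow hXpos hb2
    have hXqinv : Xq⁻¹ = (φc r / t) ^ (1 / (β₂ - 1)) := by
      rw [hXq_def, ← Real.inv_rpow hXpos.le, hXinv]
    -- first: u ≤ M₀ * r
    have huM₀ : u ≤ M₀ * r := by
      apply key u (M₀ * r) hu (by positivity)
      rw [hfu]
      have hgrow := (hgrowth r (M₀ * r) hr (le_mul_of_one_le_left hr.le hM₀1)).1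
      have hMr : M₀ * r / r = M₀ := by field_simp
      rw [hMr] at hgrow
      have hM₀β : M₀ ^ β₁ = M₀ ^ (β₁ - 1) * M₀ := by
        rw [← Real.rpow_add_one hM₀_pos.ne' (β₁ - 1)]; ring_nf
      have hφM : c₁ * (M₀ ^ (β₁ - 1) * M₀) * φc r ≤ φc (M₀ * r) := by
        rw [← hM₀β]
        have h := (le_div_iff₀ hφr).mp hgrow
        linarith
      have hcmp := (hcomp (M₀ * r) (by positivity)).1
      have h1 : 1 ≤ a₁ * c₁ * M₀ ^ (β₁ - 1) := by
        rw [div_le_iff₀ (by positivity : (0:ℝ) < a₁ * c₁)] at hM₀_pow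
        linarith [hM₀_pow]
      calc t / r ≤ φc r / r := by gcongr
        _ ≤ a₁ * c₁ * M₀ ^ (β₁ - 1) * (φc r / r) := by
            nlinarith [div_pos hφr hr]
        _ ≤ a₁ * (φc (M₀ * r) / (M₀ * r)) := by
            rw [show a₁ * c₁ * M₀ ^ (β₁ - 1) * (φc r / r)
                  = a₁ * c₁ * M₀ ^ (β₁ - 1) * φc r / r from by ring,
                show a₁ * (φc (M₀ * r) / (M₀ * r))
                  = a₁ * φc (M₀ * r) / (M₀ * r) from by ring,
                div_le_div_iff₀ hr (by positivity)]
            nlinarith [mul_le_mul_of_nonneg_left hφM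
              (by positivity : (0:ℝ) ≤ a₁ * r)]
        _ ≤ φbar (M₀ * r) := hcmp
    by_cases hcase : M * Xq ≤ 1
    · -- w = M * Xq * r ≤ r works
      set w : ℝ := M * Xq * r with hw_def
      have hw_pos : 0 < w := by positivity
      have hwr : w ≤ r := by
        calc w = M * Xq * r := rfl
          _ ≤ 1 * r := mul_le_mul_of_nonneg_right hcase hr.le
          _ = r := one_mul r
      have hφw : 0 < φc w := hφpos w hw_pos
      have hgrow := (hgrowth w r hw_pos hwr).2
      have hrw : r / w = (M * Xq)⁻¹ := by
        rw [hw_def]; field_simp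
      have hrwβ : (r / w) ^ β₂ = (M ^ (β₂ - 1) * X * (M * Xq))⁻¹ := by
        rw [hrw]
        exact key_rpow hM_pos hXpos hb2
      rw [hrwβ] at hgrow
      -- φc r ≤ c₂ * φc w * (M^(β₂-1) * X * (M*Xq))⁻¹  ⇒  rearranged
      have hMX_pos : (0:ℝ) < M ^ (β₂ - 1) * X * (M * Xq) := by positivity
      have hgrow' : φc r * (M ^ (β₂ - 1) * X * (M * Xq)) ≤ c₂ * φc w := by
        have hgrow2 : φc r ≤ c₂ * (M ^ (β₂ - 1) * X * (M * Xq))⁻¹ * φc w :=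
          (div_le_iff₀ hφw).mp hgrow
        calc φc r * (M ^ (β₂ - 1) * X * (M * Xq))
            ≤ (c₂ * (M ^ (β₂ - 1) * X * (M * Xq))⁻¹ * φc w)
              * (M ^ (β₂ - 1) * X * (M * Xq)) :=
              mul_le_mul_of_nonneg_right hgrow2 hMX_pos.le
          _ = c₂ * φc w := by field_simp
      -- show u ≤ w
      have huw : u ≤ w := by
        apply key u w hu hw_pos
        rw [hfu]
        have hcmp := (hcomp w hw_pos).1
        have hXt : φc r * X = t := by
          rw [hX_def]; field_simp
        have hMb : c₂ / a₁ ≤ M ^ (β₂ - 1) := hM_pow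
        -- t/r ≤ a₁ * φc w / w
        have hexp : φc r * (M ^ (β₂ - 1) * X * (M * Xq)) =
            M ^ (β₂ - 1) * t * (M * Xq) := by
          rw [← hXt]; ring
        rw [hexp] at hgrow'
        -- hgrow' : M^(β₂-1) * t * (M*Xq) ≤ c₂ * φc w ; w = M*Xq*r
        have hc2a1 : c₂ * t * (M * Xq) ≤ a₁ * (M ^ (β₂ - 1) * t * (M * Xq)) := by
          have := mul_le_mul_of_nonneg_right hMb
            (by positivity : (0:ℝ) ≤ a₁ * t * (M * Xq))
          calc c₂ * t * (M * Xq) = c₂ / a₁ * (a₁ * t * (M * Xq)) := by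
                field_simp
            _ ≤ M ^ (β₂ - 1) * (a₁ * t * (M * Xq)) := this
            _ = a₁ * (M ^ (β₂ - 1) * t * (M * Xq)) := by ring
        have h2 : c₂ * t * (M * Xq) ≤ a₁ * (c₂ * φc w) :=
          hc2a1.trans (mul_le_mul_of_nonneg_left hgrow' ha₁.le)
        have h3 : t * (M * Xq) ≤ a₁ * φc w := by
          have h2' : c₂ * (t * (M * Xq)) ≤ c₂ * (a₁ * φc w) := by linarith
          exact (mul_le_mul_iff_right₀ hc₂).mp h2'
        have hgoal : t / r ≤ a₁ * (φc w / w) := by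
          calc t / r = t * (M * Xq) / (M * Xq) / r := by
                rw [mul_div_assoc]; field_simp
            _ ≤ a₁ * φc w / (M * Xq) / r := by gcongr
            _ = a₁ * (φc w / w) := by rw [hw_def]; field_simp
        exact hgoal.trans hcmp
      -- conclude
      have hrw_eq : r / w = M⁻¹ * (φc r / t) ^ (1 / (β₂ - 1)) := by
        rw [hrw, mul_inv, hXqinv]
      calc 1 / (M₀ * M) * (φc r / t) ^ (1 / (β₂ - 1))
          ≤ M⁻¹ * (φc r / t) ^ (1 / (β₂ - 1)) := by
            have hle : 1 / (M₀ * M) ≤ M⁻¹ := by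
              rw [one_div, mul_inv]
              calc M₀⁻¹ * M⁻¹ ≤ 1 * M⁻¹ :=
                    mul_le_mul_of_nonneg_right (inv_le_one_of_one_le₀ hM₀1)
                      (by positivity)
                _ = M⁻¹ := one_mul _
            exact mul_le_mul_of_nonneg_right hle (by positivity)
        _ = r / w := hrw_eq.symm
        _ ≤ r / u := by gcongr
    · -- Xq⁻¹ < M : use u ≤ M₀ * r
      push_neg at hcase
      have hXqinv_lt : (φc r / t) ^ (1 / (β₂ - 1)) < M := by
        rw [← hXqinv]
        rw [inv_lt_comm₀ (by positivity) hM_pos]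
        calc M⁻¹ = M⁻¹ * 1 := (mul_one _).symm
          _ < M⁻¹ * (M * Xq) := by gcongr
          _ = Xq := by field_simp
      calc 1 / (M₀ * M) * (φc r / t) ^ (1 / (β₂ - 1))
          ≤ 1 / (M₀ * M) * M :=
            mul_le_mul_of_nonneg_left hXqinv_lt.le (by positivity)
        _ = 1 / M₀ := by field_simp
        _ = r / (M₀ * r) := by field_simp
        _ ≤ r / u := by gcongr
  · -- upper bound: r / u ≤ k₂ * (φc r / t) ^ (1/(β₁-1))
    set Xp : ℝ := X ^ (1 / (β₁ - 1)) with hXp_def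
    have hXp_pos : 0 < Xp := Real.rpow_pos_of_pos hXpos _
    have hXp_le1 : Xp ≤ 1 := Real.rpow_le_one hXpos.le hX1 (by positivity)
    have hXp_pow : Xp ^ (β₁ - 1) = X := rpow_one_div_pow hXpos hb1
    have hXpinv : Xp⁻¹ = (φc r / t) ^ (1 / (β₁ - 1)) := by
      rw [hXp_def, ← Real.inv_rpow hXpos.le, hXinv]
    set v : ℝ := m * Xp * r with hv_def
    have hv_pos : 0 < v := by positivity
    have hvr : v ≤ r := by
      have hmXp : m * Xp ≤ 1 := mul_le_one₀ hm_le1 hXp_pos.le hXp_le1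
      calc v = m * Xp * r := rfl
        _ ≤ 1 * r := mul_le_mul_of_nonneg_right hmXp hr.le
        _ = r := one_mul r
    have hφv : 0 < φc v := hφpos v hv_pos
    have hgrow := (hgrowth v r hv_pos hvr).1
    have hrv : r / v = (m * Xp)⁻¹ := by rw [hv_def]; field_simp
    have hrvβ : (r / v) ^ β₁ = (m ^ (β₁ - 1) * X * (m * Xp))⁻¹ := by
      rw [hrv]
      exact key_rpow hm_pos hXpos hb1
    rw [hrvβ] at hgrow
    have hmX_pos : (0:ℝ) < m ^ (β₁ - 1) * X * (m * Xp) := by positivity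
    -- from hgrow : c₁ * (...)⁻¹ ≤ φc r / φc v, get c₁ * φc v ≤ φc r * (...)
    have hgrow' : c₁ * φc v ≤ φc r * (m ^ (β₁ - 1) * X * (m * Xp)) := by
      rw [le_div_iff₀ hφv] at hgrow
      calc c₁ * φc v
          = (c₁ * (m ^ (β₁ - 1) * X * (m * Xp))⁻¹ * φc v) *
            (m ^ (β₁ - 1) * X * (m * Xp)) := by field_simp
        _ ≤ φc r * (m ^ (β₁ - 1) * X * (m * Xp)) := by gcongr
    have hXt : φc r * X = t := by rw [hX_def]; field_simp
    -- show φbar v ≤ t / r, hence v ≤ u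
    have hvu : v ≤ u := by
      apply key v u hv_pos hu
      rw [hfu]
      have hcmp := (hcomp v hv_pos).2
      have hexp : φc r * (m ^ (β₁ - 1) * X * (m * Xp)) =
          m ^ (β₁ - 1) * t * (m * Xp) := by rw [← hXt]; ring
      rw [hexp] at hgrow'
      -- hgrow' : c₁ * φc v ≤ m^(β₁-1) * t * (m*Xp)
      have hm2 : m ^ (β₁ - 1) * t * (m * Xp) ≤ c₁ / a₂ * (t * (m * Xp)) := by
        have := mul_le_mul_of_nonneg_right hm_pow
          (by positivity : (0:ℝ) ≤ t * (m * Xp))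
        calc m ^ (β₁ - 1) * t * (m * Xp) = m ^ (β₁ - 1) * (t * (m * Xp)) := by ring
          _ ≤ c₁ / a₂ * (t * (m * Xp)) := this
      have h3 : a₂ * φc v ≤ t * (m * Xp) := by
        have h4 : c₁ * φc v ≤ c₁ / a₂ * (t * (m * Xp)) := hgrow'.trans hm2
        have h5 : a₂ * (c₁ * φc v) ≤ a₂ * (c₁ / a₂ * (t * (m * Xp))) := by
          gcongr
        have h6 : a₂ * (c₁ / a₂ * (t * (m * Xp))) = c₁ * (t * (m * Xp)) := by
          field_simp
        rw [h6] at h5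
        have h7 : c₁ * (a₂ * φc v) ≤ c₁ * (t * (m * Xp)) := by linarith
        exact (mul_le_mul_iff_right₀ hc₁).mp h7
      have hgoal : a₂ * (φc v / v) ≤ t / r := by
        calc a₂ * (φc v / v) = a₂ * φc v / v := by ring
          _ ≤ t * (m * Xp) / v := by gcongr
          _ = t / r := by rw [hv_def]; field_simp
      exact hcmp.trans hgoal
    calc r / u ≤ r / v := by gcongr
      _ = (m * Xp)⁻¹ := hrv
      _ = 1 / m * (φc r / t) ^ (1 / (β₁ - 1)) := by
          rw [mul_inv, hXpinv]; ring
end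

section
/- (Lemma 4.8, monotonicity part) Let φ_c satisfy the polynomial growth condition with exponents β₂ ≥ β₁ > 1 and let φ̄_c be its regularization (comparable to φ_c(r)/r and strictly increasing). For any C* > 0 there exists C₀ > 0 such that for every t ∈ (0,1] the function r ↦ F(r) := exp(C*·r/φ̄_c⁻¹(t/r)) / (r/φ̄_c⁻¹(t/r)) is strictly increasing on [C₀·φ_c⁻¹(t), ∞). -/
theorem stmt_14 (φc φbar ψc ψbar : ℝ → ℝ) (c₁ c₂ a₁ a₂ β₁ β₂ : ℝ)
    (hc₁ : 0 < c₁) (hc₂ : 0 < c₂) (ha₁ : 0 < a₁) (ha₂ : 0 < a₂)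
    (hβ₁ : 1 < β₁) (hβ : β₁ ≤ β₂)
    (hφmono : StrictMonoOn φc (Set.Ioi 0)) (hφcont : ContinuousOn φc (Set.Ioi 0))
    (hφpos : ∀ r > (0:ℝ), 0 < φc r)
    (hgrowth : ∀ r R : ℝ, 0 < r → r ≤ R →
      c₁ * (R / r) ^ β₁ ≤ φc R / φc r ∧ φc R / φc r ≤ c₂ * (R / r) ^ β₂)
    (hbarmono : StrictMonoOn φbar (Set.Ioi 0))
    (hcomp : ∀ r > (0:ℝ), a₁ * (φc r / r) ≤ φbar r ∧ φbar r ≤ a₂ * (φc r / r))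
    (hψc : ∀ t > (0:ℝ), ψc t > 0 ∧ φc (ψc t) = t)
    (hψbar : ∀ s > (0:ℝ), ψbar s > 0 ∧ φbar (ψbar s) = s) :
    ∀ Cs > (0:ℝ), ∃ C₀ > (0:ℝ), ∀ t ∈ Set.Ioc (0:ℝ) 1,
      StrictMonoOn
        (fun r => Real.exp (Cs * (r / ψbar (t / r))) / (r / ψbar (t / r)))
        (Set.Ici (C₀ * ψc t)) := by
  intro Cs hCs
  have ha₁' : (0:ℝ) < 1/a₁ := by positivity
  refine ⟨max (1/a₁) (1/Cs), lt_of_lt_of_le ha₁' (le_max_left _ _), ?_⟩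
  set C₀ := max (1/a₁) (1/Cs) with hC₀def
  have hC₀pos : 0 < C₀ := lt_of_lt_of_le ha₁' (le_max_left _ _)
  intro t ht
  obtain ⟨ht0, -⟩ := ht
  obtain ⟨hψct, hφψ⟩ := hψc t ht0
  have hr₀ : 0 < C₀ * ψc t := mul_pos hC₀pos hψct
  -- ψbar is strictly increasing on positives
  have hψmono : ∀ x y : ℝ, 0 < x → x < y → ψbar x < ψbar y := by
    intro x y hx hxy
    have hy : 0 < y := hx.trans hxy
    obtain ⟨hpx, hex⟩ := hψbar x hx
    obtain ⟨hpy, hey⟩ := hψbar y hy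
    by_contra h
    push_neg at h
    have := hbarmono.monotoneOn (Set.mem_Ioi.mpr hpy) (Set.mem_Ioi.mpr hpx) h
    rw [hex, hey] at this
    linarith
  -- the map r ↦ r / ψbar (t/r) is strictly increasing on positives
  have hg : ∀ a b : ℝ, 0 < a → a < b → a / ψbar (t/a) < b / ψbar (t/b) := by
    intro a b ha hab
    have hb : 0 < b := ha.trans hab
    have hta : 0 < t/a := by positivity
    have htb : 0 < t/b := by positivity
    have h1 : t/b < t/a := div_lt_div_of_pos_left ht0 ha hab
    have h2 : ψbar (t/b) < ψbar (t/a) := hψmono _ _ htb h1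
    have hpb : 0 < ψbar (t/b) := (hψbar _ htb).1
    have hpa : 0 < ψbar (t/a) := (hψbar _ hta).1
    rw [div_lt_div_iff₀ hpa hpb]
    nlinarith
  -- lower bound at the left endpoint
  have hkey : 1/Cs ≤ (C₀ * ψc t) / ψbar (t / (C₀ * ψc t)) := by
    have htr : 0 < t / (C₀ * ψc t) := by positivity
    obtain ⟨hupos, hueq⟩ := hψbar _ htr
    have hinv : 1/C₀ ≤ a₁ := by
      have h1 : 1/C₀ ≤ 1/(1/a₁) :=
        one_div_le_one_div_of_le ha₁' (le_max_left _ _)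
      rwa [one_div_one_div] at h1
    -- φbar (ψbar (t/(C₀ ψc t))) ≤ φbar (ψc t)
    have hle : φbar (ψbar (t / (C₀ * ψc t))) ≤ φbar (ψc t) := by
      rw [hueq]
      have hc := (hcomp (ψc t) hψct).1
      rw [hφψ] at hc
      have : t / (C₀ * ψc t) = (1/C₀) * (t / ψc t) := by
        field_simp
      rw [this]
      have h2 : (1/C₀) * (t / ψc t) ≤ a₁ * (t / ψc t) := by
        apply mul_le_mul_of_nonneg_right hinv (by positivity)
      linarith
    have hule : ψbar (t / (C₀ * ψc t)) ≤ ψc t := by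
      by_contra h
      push_neg at h
      have := hbarmono (Set.mem_Ioi.mpr hψct) (Set.mem_Ioi.mpr hupos) h
      linarith
    have hC₀le : 1/Cs ≤ C₀ := le_max_right _ _
    calc 1/Cs ≤ C₀ := hC₀le
      _ = (C₀ * ψc t) / ψc t := by field_simp
      _ ≤ (C₀ * ψc t) / ψbar (t / (C₀ * ψc t)) := by
          apply div_le_div_of_nonneg_left (le_of_lt hr₀) hupos hule
  -- conclude
  intro a ha b hb hab
  simp only [Set.mem_Ici] at ha hb
  have ha0 : 0 < a := lt_of_lt_of_le hr₀ ha
  have hb0 : 0 < b := ha0.trans hab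
  set sa := a / ψbar (t/a) with hsa_def
  set sb := b / ψbar (t/b) with hsb_def
  have hsasb : sa < sb := hg a b ha0 hab
  have hsa : 1/Cs ≤ sa := by
    rcases eq_or_lt_of_le ha with h | h
    · rw [hsa_def, ← h]; exact hkey
    · exact hkey.trans (le_of_lt (hg _ _ hr₀ h))
  have hsapos : 0 < sa := lt_of_lt_of_le (by positivity) hsa
  have hsbpos : 0 < sb := hsapos.trans hsasb
  have hCsa : 1 ≤ Cs * sa := by
    have := (div_le_iff₀ hCs).mp hsa
    linarith
  -- the exponential inequality
  have hδ : 0 < Cs * (sb - sa) := by nlinarith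
  have hE : Real.exp (Cs * sb) = Real.exp (Cs * sa) * Real.exp (Cs * (sb - sa)) := by
    rw [← Real.exp_add]; ring_nf
  have h3 : Cs * (sb - sa) + 1 < Real.exp (Cs * (sb - sa)) :=
    Real.add_one_lt_exp (ne_of_gt hδ)
  have h4 : sb ≤ sa * (1 + Cs * (sb - sa)) := by nlinarith
  have h5 : sb < sa * Real.exp (Cs * (sb - sa)) := by nlinarith
  simp only [← hsa_def, ← hsb_def]
  rw [div_lt_div_iff₀ hsapos hsbpos, hE]
  have hEpos : 0 < Real.exp (Cs * sa) := Real.exp_pos _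
  nlinarith [mul_lt_mul_of_pos_left h5 hEpos]
end

section
/- Let (M,d,μ) satisfy volume doubling with exponent d₂ (V(x,R)/V(x,r) ≤ C̃(R/r)^{d₂} for R ≥ r), and let φ_c satisfy the polynomial growth condition with exponents β₂ ≥ β₁ > 1 and regularization φ̄_c. Then there exist constants c, c' > 0 such that for all x, y with d(x,y) > 0 and all 0 < t ≤ φ_c(d(x,y)): (1/V(x,φ_c⁻¹(t)))·exp(−d(x,y)/φ̄_c⁻¹(t/d(x,y))) ≤ (c/V(x,d(x,y)))·exp(−c'·(φ_c(d(x,y))/t)^{1/(β₂−1)}). -/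
open MeasureTheory

theorem poly_le_exp_aux (a c : ℝ) (ha : 0 ≤ a) (hc : 0 < c) :
    ∃ C > (0:ℝ), ∀ y : ℝ, 1 ≤ y → y ^ a ≤ C * Real.exp (c * y) := by
  set n : ℕ := ⌈a⌉₊ + 1 with hn
  have hnpos : (0:ℝ) < n := by positivity
  refine ⟨(n / c) ^ n, by positivity, fun y hy => ?_⟩
  have hy0 : (0:ℝ) ≤ y := by linarith
  have h1 : y ^ a ≤ y ^ (n : ℝ) :=
    Real.rpow_le_rpow_of_exponent_le hy ((Nat.le_ceil a).trans (by exact_mod_cast Nat.le_succ _))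
  rw [Real.rpow_natCast] at h1
  have h3 : c / n * y ≤ Real.exp (c / n * y) := by linarith [Real.add_one_le_exp (c / n * y)]
  have h2 : y ≤ (n / c) * Real.exp (c / n * y) := by
    calc y = (n / c) * (c / n * y) := by field_simp
    _ ≤ (n / c) * Real.exp (c / n * y) := mul_le_mul_of_nonneg_left h3 (by positivity)
  calc y ^ a ≤ y ^ n := h1
  _ ≤ ((n / c) * Real.exp (c / n * y)) ^ n := pow_le_pow_left₀ hy0 h2 n
  _ = (n / c) ^ n * Real.exp (c / n * y) ^ n := mul_pow _ _ _
  _ = (n / c) ^ n * Real.exp (n * (c / n * y)) := by rw [Real.exp_nat_mul]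
  _ = (n / c) ^ n * Real.exp (c * y) := by congr 1; field_simp

set_option maxHeartbeats 800000 in
theorem stmt_16 {M : Type*} [PseudoMetricSpace M] [MeasurableSpace M]
    (μ : Measure M) (φc φbar ψc ψbar : ℝ → ℝ)
    (C' d₂ c₁ c₂ a₁ a₂ β₁ β₂ : ℝ)
    (hC' : 0 < C') (hd₂ : 0 < d₂)
    (hc₁ : 0 < c₁) (hc₂ : 0 < c₂) (ha₁ : 0 < a₁) (ha₂ : 0 < a₂)
    (hβ₁ : 1 < β₁) (hβ : β₁ ≤ β₂)
    (hVpos : ∀ (x : M) (r : ℝ), 0 < r → 0 < (μ (Metric.ball x r)).toReal)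
    (hVD : ∀ (x : M) (r R : ℝ), 0 < r → r ≤ R →
      (μ (Metric.ball x R)).toReal / (μ (Metric.ball x r)).toReal ≤ C' * (R / r) ^ d₂)
    (hφpos : ∀ r > (0:ℝ), 0 < φc r)
    (hgrowth : ∀ r R : ℝ, 0 < r → r ≤ R →
      c₁ * (R / r) ^ β₁ ≤ φc R / φc r ∧ φc R / φc r ≤ c₂ * (R / r) ^ β₂)
    (hbarmono : StrictMonoOn φbar (Set.Ioi 0))
    (hcomp : ∀ r > (0:ℝ), a₁ * (φc r / r) ≤ φbar r ∧ φbar r ≤ a₂ * (φc r / r))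
    (hψc : ∀ t > (0:ℝ), ψc t > 0 ∧ φc (ψc t) = t)
    (hψbar : ∀ s > (0:ℝ), ψbar s > 0 ∧ φbar (ψbar s) = s) :
    ∃ c > (0:ℝ), ∃ c' > (0:ℝ), ∀ (x y : M) (t : ℝ),
      0 < dist x y → 0 < t → t ≤ φc (dist x y) →
      (1 / (μ (Metric.ball x (ψc t))).toReal)
          * Real.exp (-(dist x y / ψbar (t / dist x y)))
        ≤ (c / (μ (Metric.ball x (dist x y))).toReal)
          * Real.exp (-(c' * (φc (dist x y) / t) ^ (1 / (β₂ - 1)))) := by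
  have hβ₂ : 1 < β₂ := lt_of_lt_of_le hβ₁ hβ
  have hβ₂1 : 0 < β₂ - 1 := by linarith
  have hβ₁0 : 0 < β₁ := by linarith
  set α' := 1 / (β₂ - 1) with hα'def
  have hα : 0 < α' := by rw [hα'def]; positivity
  set c₀ := (a₁ / c₂) ^ α' with hc₀def
  have hc₀ : 0 < c₀ := Real.rpow_pos_of_pos (by positivity) _
  set B := max 1 (1 / (a₁ * c₁)) with hBdef
  have hB1 : (1:ℝ) ≤ B := le_max_left _ _
  have hB0 : (0:ℝ) < B := lt_of_lt_of_le one_pos hB1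
  set K₂ := Real.exp (c₀ * B ^ α') with hK₂def
  have hK₂1 : 1 ≤ K₂ := Real.one_le_exp (by positivity)
  have hK₂0 : 0 < K₂ := lt_of_lt_of_le one_pos hK₂1
  set p := d₂ / β₁ with hpdef
  have hp0 : 0 < p := by rw [hpdef]; positivity
  set K₁ := max 1 (C' * (1 / c₁) ^ p) with hK₁def
  have hK₁1 : (1:ℝ) ≤ K₁ := le_max_left _ _
  have hK₁0 : (0:ℝ) < K₁ := lt_of_lt_of_le one_pos hK₁1
  obtain ⟨K₃, hK₃0, hK₃⟩ := poly_le_exp_aux (p * (β₂ - 1)) (c₀ / 2) (by positivity) (by positivity)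
  refine ⟨K₁ * K₂ * K₃, by positivity, c₀ / 2, by positivity, ?_⟩
  intro x y t hr ht hle
  set r := dist x y with hrdef
  obtain ⟨hρpos, hρeq⟩ := hψc t ht
  set ρ := ψc t with hρdef
  have htr : 0 < t / r := div_pos ht hr
  obtain ⟨hupos, hueq⟩ := hψbar (t / r) htr
  set u := ψbar (t / r) with hudef
  set Vρ := (μ (Metric.ball x ρ)).toReal with hVρdef
  set Vr := (μ (Metric.ball x r)).toReal with hVrdef
  have hVρpos : 0 < Vρ := hVpos x ρ hρpos
  have hVrpos : 0 < Vr := hVpos x r hr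
  set Q := φc r / t with hQdef
  have hφr : 0 < φc r := hφpos r hr
  have hQ1 : 1 ≤ Q := (one_le_div ht).mpr hle
  have hQpos : 0 < Q := lt_of_lt_of_le one_pos hQ1
  have hQα1 : 1 ≤ Q ^ α' := Real.one_le_rpow hQ1 hα.le
  have hQp1 : 1 ≤ Q ^ p := Real.one_le_rpow hQ1 hp0.le
  -- Claim A : volume comparison
  have claimA : Vr ≤ K₁ * Q ^ p * Vρ := by
    rcases le_or_gt r ρ with h | h
    · have hfin : μ (Metric.ball x ρ) ≠ ⊤ := by
        intro habs
        rw [hVρdef, habs] at hVρpos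
        simp at hVρpos
      have hmono : Vr ≤ Vρ :=
        ENNReal.toReal_mono hfin (measure_mono (Metric.ball_subset_ball h))
      have h1 : (1:ℝ) ≤ K₁ * Q ^ p := by
        calc (1:ℝ) = 1 * 1 := by ring
        _ ≤ K₁ * Q ^ p := mul_le_mul hK₁1 hQp1 zero_le_one hK₁0.le
      calc Vr ≤ Vρ := hmono
      _ = 1 * Vρ := by ring
      _ ≤ K₁ * Q ^ p * Vρ := mul_le_mul_of_nonneg_right h1 hVρpos.le
    · have hratio := hVD x ρ r hρpos h.le
      have hg := (hgrowth ρ r hρpos h.le).1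
      rw [hρeq] at hg
      have hX : 0 < r / ρ := div_pos hr hρpos
      have hX1 : (r / ρ) ^ β₁ ≤ Q / c₁ := by
        rw [le_div_iff₀ hc₁]
        calc (r / ρ) ^ β₁ * c₁ = c₁ * (r / ρ) ^ β₁ := by ring
        _ ≤ Q := hg
      have hX2 : r / ρ ≤ (Q / c₁) ^ (1 / β₁) := by
        calc r / ρ = ((r / ρ) ^ β₁) ^ β₁⁻¹ := (Real.rpow_rpow_inv hX.le (ne_of_gt hβ₁0)).symm
        _ ≤ (Q / c₁) ^ β₁⁻¹ := Real.rpow_le_rpow (by positivity) hX1 (by positivity)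
        _ = (Q / c₁) ^ (1 / β₁) := by rw [one_div]
      have hX3 : (r / ρ) ^ d₂ ≤ (1 / c₁) ^ p * Q ^ p := by
        calc (r / ρ) ^ d₂ ≤ ((Q / c₁) ^ (1 / β₁)) ^ d₂ := Real.rpow_le_rpow hX.le hX2 hd₂.le
        _ = (Q / c₁) ^ (1 / β₁ * d₂) := (Real.rpow_mul (by positivity) _ _).symm
        _ = (Q / c₁) ^ p := by rw [show 1 / β₁ * d₂ = p by rw [hpdef]; ring]
        _ = Q ^ p / c₁ ^ p := Real.div_rpow hQpos.le hc₁.le _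
        _ = (1 / c₁) ^ p * Q ^ p := by rw [one_div, Real.inv_rpow hc₁.le, div_eq_mul_inv]; ring
      have h2 : Vr / Vρ ≤ C' * ((1 / c₁) ^ p * Q ^ p) :=
        le_trans hratio (mul_le_mul_of_nonneg_left hX3 hC'.le)
      rw [div_le_iff₀ hVρpos] at h2
      have hCK : C' * (1 / c₁) ^ p ≤ K₁ := le_max_right _ _
      have h3 : (0:ℝ) ≤ (K₁ - C' * (1 / c₁) ^ p) * (Q ^ p * Vρ) :=
        mul_nonneg (by linarith) (by positivity)
      linarith [h2, h3]
  -- bound on φc u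
  have hφu : φc u ≤ t / r * u / a₁ := by
    have h := (hcomp u hupos).1
    rw [hueq] at h
    have h2 : a₁ * φc u ≤ t / r * u := by
      calc a₁ * φc u = a₁ * (φc u / u) * u := by field_simp
      _ ≤ t / r * u := mul_le_mul_of_nonneg_right h hupos.le
    rw [le_div_iff₀ ha₁]
    linarith
  -- Claim B : exponential comparison
  have claimB : Real.exp (-(r / u)) ≤ K₂ * Real.exp (-(c₀ * Q ^ α')) := by
    rcases le_or_gt u r with hur | hur
    · have hg := (hgrowth u r hupos hur).2
      have hφupos : 0 < φc u := hφpos u hupos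
      have hX : 0 < r / u := div_pos hr hupos
      have h1 : φc r ≤ c₂ * (r / u) ^ β₂ * φc u := by
        rw [div_le_iff₀ hφupos] at hg; linarith
      have h2 : φc r ≤ c₂ * (r / u) ^ β₂ * (t / r * u / a₁) :=
        le_trans h1 (mul_le_mul_of_nonneg_left hφu (by positivity))
      have hXβ : (r / u) ^ (β₂ - 1) = (r / u) ^ β₂ * (u / r) := by
        rw [Real.rpow_sub hX, Real.rpow_one, div_eq_mul_inv, inv_div]
      have h3 : a₁ / c₂ * Q ≤ (r / u) ^ (β₂ - 1) := by
        rw [hXβ]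
        have h4 : Q ≤ c₂ / a₁ * ((r / u) ^ β₂ * (u / r)) := by
          rw [hQdef, div_le_iff₀ ht]
          calc φc r ≤ c₂ * (r / u) ^ β₂ * (t / r * u / a₁) := h2
          _ = c₂ / a₁ * ((r / u) ^ β₂ * (u / r)) * t := by field_simp
        calc a₁ / c₂ * Q ≤ a₁ / c₂ * (c₂ / a₁ * ((r / u) ^ β₂ * (u / r))) :=
          mul_le_mul_of_nonneg_left h4 (by positivity)
        _ = (r / u) ^ β₂ * (u / r) := by field_simp
      have h5 : c₀ * Q ^ α' ≤ r / u := by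
        calc c₀ * Q ^ α' = (a₁ / c₂ * Q) ^ α' := by
              rw [Real.mul_rpow (by positivity) hQpos.le]
        _ = (a₁ / c₂ * Q) ^ (β₂ - 1)⁻¹ := by rw [hα'def, one_div]
        _ ≤ ((r / u) ^ (β₂ - 1)) ^ (β₂ - 1)⁻¹ :=
          Real.rpow_le_rpow (by positivity) h3 (by positivity)
        _ = r / u := Real.rpow_rpow_inv hX.le (ne_of_gt hβ₂1)
      calc Real.exp (-(r / u)) ≤ Real.exp (-(c₀ * Q ^ α')) := Real.exp_le_exp.mpr (by linarith)
      _ ≤ K₂ * Real.exp (-(c₀ * Q ^ α')) := le_mul_of_one_le_left (Real.exp_pos _).le hK₂1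
    · have hg := (hgrowth r u hr hur.le).1
      have hY1 : 1 ≤ u / r := (one_le_div hr).mpr hur.le
      have hY : u / r ≤ (u / r) ^ β₁ := by
        calc u / r = (u / r) ^ (1:ℝ) := (Real.rpow_one _).symm
        _ ≤ (u / r) ^ β₁ := Real.rpow_le_rpow_of_exponent_le hY1 hβ₁.le
      rw [le_div_iff₀ hφr] at hg
      have h1 : c₁ * (u / r) * φc r ≤ φc u := by
        have h1a : c₁ * (u / r) * φc r ≤ c₁ * ((u / r) ^ β₁) * φc r :=
          mul_le_mul_of_nonneg_right (mul_le_mul_of_nonneg_left hY hc₁.le) hφr.le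
        linarith [hg]
      have h3 : c₁ * (u / r) * φc r ≤ t / r * u / a₁ := le_trans h1 hφu
      have h4 : c₁ * (u / r) * φc r * (r / u) ≤ t / r * u / a₁ * (r / u) :=
        mul_le_mul_of_nonneg_right h3 (by positivity)
      have hune : u ≠ 0 := ne_of_gt hupos
      have hrne : r ≠ 0 := ne_of_gt hr
      have e1 : c₁ * (u / r) * φc r * (r / u) = c₁ * φc r := by field_simp
      have e2 : t / r * u / a₁ * (r / u) = t / a₁ := by field_simp
      rw [e1, e2] at h4
      have h2 : Q ≤ B := by
        have h4' : a₁ * c₁ * φc r ≤ t := by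
          have h6 := mul_le_mul_of_nonneg_left h4 ha₁.le
          have e3 : a₁ * (t / a₁) = t := by field_simp
          rw [e3] at h6
          linarith
        have h5 : Q ≤ 1 / (a₁ * c₁) := by
          rw [hQdef, div_le_div_iff₀ ht (by positivity)]
          linarith
        exact le_trans h5 (le_max_right _ _)
      have h5 : Q ^ α' ≤ B ^ α' := Real.rpow_le_rpow hQpos.le h2 hα.le
      have h6 : Real.exp (-(r / u)) ≤ 1 :=
        Real.exp_le_one_iff.mpr (neg_nonpos.mpr (div_nonneg hr.le hupos.le))
      have h7 : c₀ * Q ^ α' ≤ c₀ * B ^ α' := mul_le_mul_of_nonneg_left h5 hc₀.le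
      calc Real.exp (-(r / u)) ≤ 1 := h6
      _ ≤ Real.exp (c₀ * B ^ α' - c₀ * Q ^ α') := Real.one_le_exp (by linarith)
      _ = K₂ * Real.exp (-(c₀ * Q ^ α')) := by
          rw [hK₂def, ← Real.exp_add, sub_eq_add_neg]
  -- Claim C : absorbing the polynomial
  have claimC : Q ^ p * Real.exp (-(c₀ * Q ^ α')) ≤ K₃ * Real.exp (-(c₀ / 2 * Q ^ α')) := by
    have h1 := hK₃ (Q ^ α') hQα1
    have h2 : (Q ^ α') ^ (p * (β₂ - 1)) = Q ^ p := by
      rw [← Real.rpow_mul hQpos.le]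
      congr 1
      rw [hα'def]
      field_simp
    rw [h2] at h1
    have h3 := mul_le_mul_of_nonneg_right h1 (Real.exp_pos (-(c₀ * Q ^ α'))).le
    calc Q ^ p * Real.exp (-(c₀ * Q ^ α'))
        ≤ K₃ * Real.exp (c₀ / 2 * Q ^ α') * Real.exp (-(c₀ * Q ^ α')) := h3
    _ = K₃ * Real.exp (-(c₀ / 2 * Q ^ α')) := by
        rw [mul_assoc, ← Real.exp_add]; congr 2; ring
  -- assemble
  have final : Vr * Real.exp (-(r / u)) ≤
      K₁ * K₂ * K₃ * Vρ * Real.exp (-(c₀ / 2 * Q ^ α')) := by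
    calc Vr * Real.exp (-(r / u)) ≤ K₁ * Q ^ p * Vρ * Real.exp (-(r / u)) :=
      mul_le_mul_of_nonneg_right claimA (Real.exp_pos _).le
    _ ≤ K₁ * Q ^ p * Vρ * (K₂ * Real.exp (-(c₀ * Q ^ α'))) :=
      mul_le_mul_of_nonneg_left claimB (by positivity)
    _ = K₁ * K₂ * Vρ * (Q ^ p * Real.exp (-(c₀ * Q ^ α'))) := by ring
    _ ≤ K₁ * K₂ * Vρ * (K₃ * Real.exp (-(c₀ / 2 * Q ^ α'))) :=
      mul_le_mul_of_nonneg_left claimC (by positivity)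
    _ = K₁ * K₂ * K₃ * Vρ * Real.exp (-(c₀ / 2 * Q ^ α')) := by ring
  rw [show 1 / Vρ * Real.exp (-(r / u)) = Real.exp (-(r / u)) / Vρ by ring,
      show K₁ * K₂ * K₃ / Vr * Real.exp (-(c₀ / 2 * Q ^ α')) =
        K₁ * K₂ * K₃ * Real.exp (-(c₀ / 2 * Q ^ α')) / Vr by ring,
      div_le_div_iff₀ hVρpos hVrpos]
  linarith [final]
end
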